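/- Let n ≥ 3 and let f : ℝ^{n-1} → ℝ be bounded and continuous. Then for every compact set K ⊆ ℝ^{n-1}, sup_{y ∈ K} |DLf(x,y) − (1/2) f(y)| → 0 as x → 0⁺. (Jump relation for the double layer potential on the half-space.) -/

import Mathlib

/-
Substituting `y' = y - x • u` turns `DLf(x, y)` into `∫ g u * f (y - x • u) du` for the fixed
kernel `g u = σ⁻¹ (1 + ‖u‖²)^(-n/2)`. This kernel is integrable with total mass `1/2`: writing
`(1 + r²)^(-s) Γ(s) = ∫₀^∞ t^(s-1) e^(-t(1+r²)) dt` and integrating the Gaussians in `u` first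
gives `∫ (1 + ‖u‖²)^(-s) du = π^(d/2) Γ(s - d/2) / Γ(s)` in dimension `d`. By dominated
convergence, `(x, y) ↦ ∫ g u * f (y - x • u) du` is jointly continuous on `ℝ × ℝ^(n-1)`, also at
`x = 0`, where it equals `f y / 2`; on a compact set of `y` this continuity is uniform.
-/

open MeasureTheory Real Filter

/-- Surface measure of the unit sphere in `ℝⁿ`: `σ_{n-1} = 2 π^{n/2} / Γ(n/2)`. -/
noncomputable def sphereMeasure (n : ℕ) : ℝ :=
  2 * Real.pi ^ ((n : ℝ) / 2) / Real.Gamma ((n : ℝ) / 2)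

/-- The double layer potential of `f : ℝ^{n-1} → ℝ` on the half-space, for `x > 0`:
`DLf(x,y) = (1/σ_{n-1}) ∫ x (x² + |y-y'|²)^{-n/2} f(y') dy'`. -/
noncomputable def doubleLayer (n : ℕ) (f : EuclideanSpace ℝ (Fin (n - 1)) → ℝ)
    (x : ℝ) (y : EuclideanSpace ℝ (Fin (n - 1))) : ℝ :=
  (1 / sphereMeasure n) * ∫ y' : EuclideanSpace ℝ (Fin (n - 1)),
    x * (x ^ 2 + ‖y - y'‖ ^ 2) ^ (-(n : ℝ) / 2) * f y'

open Set Module Topology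

section Subordination

variable {V : Type*} [NormedAddCommGroup V] [InnerProductSpace ℝ V] [FiniteDimensional ℝ V]
  [MeasurableSpace V] [BorelSpace V]

theorem integral_one_add_norm_sq_rpow_neg {s : ℝ} (hs : (finrank ℝ V : ℝ) / 2 < s) :
    ∫ v : V, (1 + ‖v‖ ^ 2) ^ (-s) =
      π ^ ((finrank ℝ V : ℝ) / 2) * Gamma (s - finrank ℝ V / 2) / Gamma s := by
  set a : ℝ := (finrank ℝ V : ℝ) / 2 with ha
  have hs0 : 0 < s := lt_of_le_of_lt (by positivity) hs
  set F : ℝ → V → ℝ := fun t v => t ^ (s - 1) * exp (-t) * exp (-t * ‖v‖ ^ 2)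
  have hsubord : ∀ v : V, (1 + ‖v‖ ^ 2) ^ (-s) = (Gamma s)⁻¹ * ∫ t in Ioi 0, F t v := by
    intro v
    have h := integral_rpow_mul_exp_neg_mul_Ioi hs0 (by positivity : (0 : ℝ) < 1 + ‖v‖ ^ 2)
    have hF : (fun t => F t v) = fun t => t ^ (s - 1) * exp (-((1 + ‖v‖ ^ 2) * t)) := by
      funext t
      simp only [F, mul_assoc, ← exp_add]
      ring_nf
    rw [hF, h, one_div, inv_rpow (by positivity), ← rpow_neg (by positivity)]
    field_simp [(Gamma_pos_of_pos hs0).ne']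
  have hgauss : ∀ t ∈ Ioi (0 : ℝ), ∫ v, F t v = π ^ a * (exp (-t) * t ^ (s - a - 1)) := by
    intro t (ht : 0 < t)
    rw [integral_const_mul, GaussianFourier.integral_rexp_neg_mul_sq_norm ht,
      div_rpow pi_pos.le ht.le, ← ha, sub_right_comm, rpow_sub ht (s - 1) a]
    field_simp
  have hint : Integrable (Function.uncurry F) ((volume.restrict (Ioi 0)).prod volume) := by
    rw [integrable_prod_iff (by fun_prop)]
    constructor
    · refine (ae_restrict_iff' measurableSet_Ioi).2 (ae_of_all _ fun t ht => ?_)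
      refine Integrable.of_integral_ne_zero (?_ : ∫ v, F t v ≠ 0)
      rw [hgauss t ht]
      have : (0 : ℝ) < t := ht
      positivity
    · refine IntegrableOn.congr_fun
        ((GammaIntegral_convergent (by linarith : 0 < s - a)).const_mul (π ^ a))
        (fun t ht => ?_) measurableSet_Ioi
      have : (0 : ℝ) < t := ht
      simp only [Function.uncurry_apply_pair, norm_of_nonneg (by positivity : 0 ≤ F t _)]
      rw [hgauss t ht]
  calc ∫ v : V, (1 + ‖v‖ ^ 2) ^ (-s)
      = (Gamma s)⁻¹ * ∫ t in Ioi 0, ∫ v, F t v := by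
        simp_rw [hsubord, integral_const_mul, integral_integral_swap hint]
    _ = (Gamma s)⁻¹ * ∫ t in Ioi 0, π ^ a * (exp (-t) * t ^ (s - a - 1)) := by
        rw [setIntegral_congr_fun measurableSet_Ioi hgauss]
    _ = π ^ a * Gamma (s - a) / Gamma s := by
        rw [integral_const_mul, ← Gamma_eq_integral (by linarith)]
        ring

end Subordination

section Scaling

variable {E : Type*} [NormedAddCommGroup E] [NormedSpace ℝ E] [FiniteDimensional ℝ E]
  [MeasurableSpace E] [BorelSpace E] (μ : Measure E) [μ.IsAddHaarMeasure]

theorem integral_rescaled_kernel_mul (P f : E → ℝ) {x : ℝ} (hx : 0 < x) (y : E) :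
    ∫ y', (x ^ finrank ℝ E)⁻¹ * P (x⁻¹ • (y - y')) * f y' ∂μ =
      ∫ u, P u * f (y - x • u) ∂μ := by
  have hsub := integral_sub_left_eq_self
    (fun v => (x ^ finrank ℝ E)⁻¹ * P (x⁻¹ • v) * f (y - v)) μ y
  simp only [sub_sub_cancel] at hsub
  have hscale := Measure.integral_comp_inv_smul_of_nonneg μ (fun u => P u * f (y - x • u)) hx.le
  simp only [smul_inv_smul₀ hx.ne'] at hscale
  rw [hsub]
  simp_rw [mul_assoc]
  rw [integral_const_mul, hscale, smul_eq_mul, inv_mul_cancel_left₀ (by positivity)]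

end Scaling

section ApproximateIdentity

variable {E : Type*} [NormedAddCommGroup E] [NormedSpace ℝ E] [MeasurableSpace E]
  [OpensMeasurableSpace E] {μ : Measure E} {g f : E → ℝ}

theorem continuous_integral_mul_comp_sub_smul (hg : Integrable g μ) (hf : Continuous f)
    {M : ℝ} (hM : ∀ y, |f y| ≤ M) :
    Continuous fun p : ℝ × E => ∫ u, g u * f (p.2 - p.1 • u) ∂μ := by
  refine continuous_of_dominated (bound := fun u => ‖g u‖ * M) (fun p => ?_) (fun p => ?_)
    (hg.norm.mul_const M) (ae_of_all _ fun u => by fun_prop)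
  · exact hg.aestronglyMeasurable.mul (by fun_prop : Continuous _).aestronglyMeasurable
  · exact ae_of_all _ fun u => by
      rw [norm_mul, Real.norm_eq_abs (f _)]
      exact mul_le_mul_of_nonneg_left (hM _) (norm_nonneg _)

theorem tendstoUniformlyOn_integral_mul_comp_sub_smul (hg : Integrable g μ) (hf : Continuous f)
    {M : ℝ} (hM : ∀ y, |f y| ≤ M) {K : Set E} (hK : IsCompact K) :
    TendstoUniformlyOn (fun (x : ℝ) y => ∫ u, g u * f (y - x • u) ∂μ)
      (fun y => (∫ u, g u ∂μ) * f y) (𝓝 0) K := by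
  have : CompactSpace K := isCompact_iff_compactSpace.mp hK
  rw [tendstoUniformlyOn_iff_tendstoUniformly_comp_coe]
  have h := Continuous.tendstoUniformly
    (fun (x : ℝ) (y : K) => ∫ u, g u * f ((y : E) - x • u) ∂μ)
    ((continuous_integral_mul_comp_sub_smul hg hf hM).comp
      (continuous_fst.prodMk (continuous_subtype_val.comp continuous_snd))) 0
  simpa only [zero_smul, sub_zero, integral_mul_const, Function.comp_def] using h

end ApproximateIdentity

theorem sphereMeasure_pos {n : ℕ} (hn : 1 ≤ n) : 0 < sphereMeasure n := by
  have hΓ := Gamma_pos_of_pos (by positivity : (0 : ℝ) < n / 2)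
  unfold sphereMeasure
  positivity

theorem integral_one_add_norm_sq_rpow_eq_sphereMeasure {n : ℕ} (hn : 1 ≤ n) :
    ∫ u : EuclideanSpace ℝ (Fin (n - 1)), (1 + ‖u‖ ^ 2) ^ (-(n : ℝ) / 2) =
      sphereMeasure n / 2 := by
  have hcast : ((n - 1 : ℕ) : ℝ) = n - 1 := by push_cast [hn]; ring
  rw [neg_div, integral_one_add_norm_sq_rpow_neg
      (by rw [finrank_euclideanSpace_fin, hcast]; linarith),
    finrank_euclideanSpace_fin, hcast, show (n : ℝ) / 2 - (n - 1) / 2 = 1 / 2 by ring,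
    Gamma_one_half_eq, sqrt_eq_rpow, mul_comm, ← rpow_add pi_pos, sphereMeasure]
  ring_nf

theorem mul_sq_add_norm_sq_rpow_eq_inv_pow_mul {E : Type*} [NormedAddCommGroup E]
    [NormedSpace ℝ E] {n : ℕ} (hn : 1 ≤ n) {x : ℝ} (hx : 0 < x) (v : E) :
    x * (x ^ 2 + ‖v‖ ^ 2) ^ (-(n : ℝ) / 2) =
      (x ^ (n - 1))⁻¹ * (1 + ‖x⁻¹ • v‖ ^ 2) ^ (-(n : ℝ) / 2) := by
  have hsplit : x ^ 2 + ‖v‖ ^ 2 = x ^ 2 * (1 + ‖x⁻¹ • v‖ ^ 2) := by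
    rw [norm_smul, norm_inv, Real.norm_of_nonneg hx.le]
    field_simp
  have hpow : (x ^ 2) ^ (-(n : ℝ) / 2) = (x ^ (n - 1))⁻¹ * x⁻¹ := by
    rw [← mul_inv, ← pow_succ, Nat.sub_add_cancel hn, ← rpow_natCast x n, ← rpow_neg hx.le,
      ← rpow_natCast x 2, ← rpow_mul hx.le]
    congr 1
    push_cast
    ring
  rw [hsplit, mul_rpow (by positivity) (by positivity), hpow]
  field_simp

/-- Jump relation for the double layer potential on the half-space: if `f` is bounded and
continuous, then `DLf(x,·) → (1/2) f` uniformly on compact sets as `x → 0⁺`. -/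
theorem doubleLayer_jump (n : ℕ) (hn : 3 ≤ n)
    (f : EuclideanSpace ℝ (Fin (n - 1)) → ℝ)
    (hf_cont : Continuous f) (hf_bdd : ∃ M : ℝ, ∀ y, |f y| ≤ M)
    (K : Set (EuclideanSpace ℝ (Fin (n - 1)))) (hK : IsCompact K) :
    TendstoUniformlyOn (fun x y => doubleLayer n f x y) (fun y => (1 / 2) * f y)
      (nhdsWithin 0 (Set.Ioi 0)) K := by
  have hn1 : 1 ≤ n := by omega
  obtain ⟨M, hM⟩ := hf_bdd
  set g : EuclideanSpace ℝ (Fin (n - 1)) → ℝ :=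
    fun u => 1 / sphereMeasure n * (1 + ‖u‖ ^ 2) ^ (-(n : ℝ) / 2)
  have hg : Integrable g := by
    refine (integrable_rpow_neg_one_add_norm_sq ?_).const_mul _
    rw [finrank_euclideanSpace_fin]
    exact_mod_cast Nat.sub_lt hn1 one_pos
  have hg_integral : ∫ u, g u = 1 / 2 := by
    rw [integral_const_mul, integral_one_add_norm_sq_rpow_eq_sphereMeasure hn1]
    field_simp [(sphereMeasure_pos hn1).ne']
  have hDL : ∀ x > 0, ∀ y, doubleLayer n f x y = ∫ u, g u * f (y - x • u) := by
    intro x hx y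
    have hscale := integral_rescaled_kernel_mul volume
      (fun u => (1 + ‖u‖ ^ 2) ^ (-(n : ℝ) / 2)) f hx y
    rw [finrank_euclideanSpace_fin] at hscale
    simp_rw [doubleLayer, mul_sq_add_norm_sq_rpow_eq_inv_pow_mul hn1 hx, hscale, g, mul_assoc,
      integral_const_mul]
  have h := tendstoUniformlyOn_integral_mul_comp_sub_smul hg hf_cont hM hK
  rw [hg_integral] at h
  exact TendstoUniformlyOn.congr (fun u hu => nhdsWithin_le_nhds (h u hu))
    (eventually_nhdsWithin_of_forall fun x hx y _ => (hDL x hx y).symm)
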